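/- Fix a positive integer N and any stepsize α̃ ∈ ℝ. Then there exists a 1-smooth convex function f : ℝ → ℝ with minimizer x⋆ satisfying |x₀ - x⋆| ≤ 1 (for x₀ = 1) such that N steps of gradient descent x_{k+1} = x_k - α̃·f'(x_k) yield f(x_N) - inf f ≥ r(N), where r(N) is the common value of 1/(2(2Nα+1)) and (1-α)^(2N)/2 at the unique α = α(N) ≥ 1 solving their equality. -/

import Mathlib

/-!
Both hard instances are convex with `1`-Lipschitz derivative and minimizer `0`. For the quadratic
`x²/2`, gradient descent from `1` gives `x_N = (1 - α̃)^N`, hence error `(1 - α̃)^(2N)/2`, which is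
at least `r(N)` unless `0 < α̃ < α(N)`. For such stepsizes take the Huber function of width
`δ = 1/(2Nα̃ + 1)`: the iterates stay in its linear region `[δ, ∞)`, so they move by exactly `α̃δ`
per step, and the error ends up `1/(2(2Nα̃ + 1)) ≥ r(N)`.
-/

open Set

def GDLowerBound (N : ℕ) (αt r : ℝ) : Prop :=
  ∃ f f' : ℝ → ℝ, ∃ xstar : ℝ,
    ConvexOn ℝ Set.univ f ∧
    (∀ x, HasDerivAt f (f' x) x) ∧
    (∀ x y, |f' x - f' y| ≤ |x - y|) ∧
    IsMinOn f Set.univ xstar ∧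
    |(1 : ℝ) - xstar| ≤ 1 ∧
    ∀ x : ℕ → ℝ, x 0 = 1 → (∀ k, x (k + 1) = x k - αt * f' (x k)) →
      f (x N) - f xstar ≥ r

theorem GDLowerBound.mono {N : ℕ} {αt r r' : ℝ} (h : GDLowerBound N αt r) (hr : r' ≤ r) :
    GDLowerBound N αt r' := by
  obtain ⟨f, f', xstar, hconv, hderiv, hlip, hmin, hdist, hgap⟩ := h
  exact ⟨f, f', xstar, hconv, hderiv, hlip, hmin, hdist,
    fun x h0 hrec => hr.trans (hgap x h0 hrec)⟩

section SupportingSlope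

variable {f g : ℝ → ℝ}

theorem hasDerivAt_of_abs_sub_sub_le_sq {a x : ℝ} (C : ℝ)
    (h : ∀ y, |f y - f x - a * (y - x)| ≤ C * (y - x) ^ 2) : HasDerivAt f a x := by
  rw [hasDerivAt_iff_isLittleO]
  refine Asymptotics.IsBigO.trans_isLittleO ?_ (Asymptotics.isLittleO_pow_sub_sub x one_lt_two)
  refine Asymptotics.IsBigO.of_bound C (Filter.Eventually.of_forall fun y => ?_)
  simpa [Real.norm_eq_abs, smul_eq_mul, mul_comm a, sq_abs] using h y

theorem convexOn_univ_of_supportingSlope (hsupp : ∀ x y, f x + g x * (y - x) ≤ f y) :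
    ConvexOn ℝ univ f := by
  refine ⟨convex_univ, fun x _ y _ a b ha hb hab => ?_⟩
  simp only [smul_eq_mul]
  set z := a * x + b * y
  have hz : a * (x - z) + b * (y - z) = 0 := by
    simp only [z]; linear_combination (-(a * x + b * y)) * hab
  have hcomb : a * (f z + g z * (x - z)) + b * (f z + g z * (y - z)) = f z := by
    linear_combination f z * hab + g z * hz
  linarith [mul_le_mul_of_nonneg_left (hsupp z x) ha, mul_le_mul_of_nonneg_left (hsupp z y) hb]

/-- The supporting line at `y` bounds the first-order error at `x` by `K (y - x)²`. -/
theorem hasDerivAt_of_supportingSlope {K : ℝ} (hsupp : ∀ x y, f x + g x * (y - x) ≤ f y)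
    (hg : ∀ x y, |g x - g y| ≤ K * |x - y|) (x : ℝ) : HasDerivAt f (g x) x := by
  have hK : 0 ≤ K := by simpa using (abs_nonneg _).trans (hg 1 0)
  refine hasDerivAt_of_abs_sub_sub_le_sq K fun y => abs_le.2 ⟨?_, ?_⟩
  · nlinarith [hsupp x y, mul_nonneg hK (sq_nonneg (y - x))]
  · have hyx := hsupp y x
    have hslope : (g y - g x) * (y - x) ≤ K * (y - x) ^ 2 := by
      calc (g y - g x) * (y - x) ≤ |g y - g x| * |y - x| := by
            rw [← abs_mul]; exact le_abs_self _
        _ ≤ K * |y - x| * |y - x| := by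
            gcongr; exact hg y x
        _ = K * (y - x) ^ 2 := by rw [mul_assoc, ← sq, sq_abs]
    linarith

theorem GDLowerBound.of_supportingSlope {N : ℕ} {αt r : ℝ}
    (hsupp : ∀ x y, f x + g x * (y - x) ≤ f y) (hg : ∀ x y, |g x - g y| ≤ |x - y|)
    (hg0 : g 0 = 0)
    (hgap : ∀ x : ℕ → ℝ, x 0 = 1 → (∀ k, x (k + 1) = x k - αt * g (x k)) → r ≤ f (x N) - f 0) :
    GDLowerBound N αt r :=
  ⟨f, g, 0, convexOn_univ_of_supportingSlope hsupp,
    hasDerivAt_of_supportingSlope (K := 1) hsupp (by simpa using hg), hg,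
    isMinOn_univ_iff.2 fun y => by simpa [hg0] using hsupp 0 y, by norm_num, hgap⟩

end SupportingSlope

theorem gdLowerBound_quadratic (N : ℕ) (αt : ℝ) :
    GDLowerBound N αt ((1 - αt) ^ (2 * N) / 2) := by
  refine GDLowerBound.of_supportingSlope (f := fun x => x ^ 2 / 2) (g := fun x => x)
    (fun x y => by nlinarith [sq_nonneg (y - x)]) (fun x y => le_rfl) rfl fun x h0 hrec => ?_
  have hx : ∀ k, x k = (1 - αt) ^ k := by
    intro k
    induction k with
    | zero => simpa using h0
    | succ k ih => rw [hrec k, ih, pow_succ]; ring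
  simp only [hx N, pow_mul']
  norm_num

noncomputable def clip (δ x : ℝ) : ℝ := max (-δ) (min δ x)

/-- The Huber function, equal to `x²/2` on `[-δ, δ]` and to `δ|x| - δ²/2` outside. -/
noncomputable def huber (δ x : ℝ) : ℝ := x * clip δ x - clip δ x ^ 2 / 2

section Huber

variable {δ : ℝ}

theorem clip_of_le (hδ : 0 ≤ δ) {x : ℝ} (hx : δ ≤ x) : clip δ x = δ := by
  rw [clip, min_eq_left hx, max_eq_right (by linarith)]

theorem clip_of_le_neg (hδ : 0 ≤ δ) {x : ℝ} (hx : x ≤ -δ) : clip δ x = -δ := by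
  rw [clip, min_eq_right (by linarith), max_eq_left (by linarith)]

theorem clip_of_abs_le {x : ℝ} (hx : |x| ≤ δ) : clip δ x = x := by
  rw [clip, min_eq_right (abs_le.1 hx).2, max_eq_right (abs_le.1 hx).1]

theorem clip_mem_Icc (hδ : 0 ≤ δ) (x : ℝ) : clip δ x ∈ Icc (-δ) δ :=
  ⟨le_max_left _ _, max_le (by linarith) (min_le_left _ _)⟩

theorem abs_clip_sub_clip_le (x y : ℝ) : |clip δ x - clip δ y| ≤ |x - y| := by
  unfold clip
  rw [max_comm (-δ), max_comm (-δ)]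
  refine (abs_max_sub_max_le_abs _ _ _).trans ?_
  simpa using abs_min_sub_min_le_max δ x δ y

theorem huber_add_clip_mul_le (hδ : 0 ≤ δ) (x y : ℝ) :
    huber δ x + clip δ x * (y - x) ≤ huber δ y := by
  obtain ⟨hlo, hhi⟩ := clip_mem_Icc hδ x
  unfold huber
  rcases le_total δ y with hy | hy
  · rw [clip_of_le hδ hy]; nlinarith [sq_nonneg (clip δ x - δ)]
  rcases le_total y (-δ) with hy' | hy'
  · rw [clip_of_le_neg hδ hy']; nlinarith [sq_nonneg (clip δ x + δ)]
  · rw [clip_of_abs_le (abs_le.2 ⟨hy', hy⟩)]; nlinarith [sq_nonneg (clip δ x - y)]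

/-- The iterates stay in `[δ, ∞)`, where `clip δ` is the constant `δ`. -/
theorem huber_gd_iterate_eq (hδ : 0 ≤ δ) {αt : ℝ} (hαt : 0 ≤ αt) {x : ℕ → ℝ} (h0 : x 0 = 1)
    (hrec : ∀ k, x (k + 1) = x k - αt * clip δ (x k)) {k : ℕ} (hk : (k * αt + 1) * δ ≤ 1) :
    x k = 1 - k * αt * δ := by
  induction k with
  | zero => simpa using h0
  | succ k ih =>
    push_cast at hk
    have hxk : x k = 1 - k * αt * δ := ih (by nlinarith [mul_nonneg hαt hδ])
    rw [hrec k, clip_of_le hδ (by rw [hxk]; nlinarith [mul_nonneg hαt hδ]), hxk]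
    push_cast; ring

end Huber

theorem gdLowerBound_huber (N : ℕ) {αt : ℝ} (hαt : 0 ≤ αt) :
    GDLowerBound N αt (1 / (2 * (2 * N * αt + 1))) := by
  have hD : 0 < 2 * N * αt + 1 := by positivity
  set δ := 1 / (2 * N * αt + 1) with hδdef
  have hδ : 0 ≤ δ := by positivity
  have hδD : δ * (2 * N * αt + 1) = 1 := one_div_mul_cancel hD.ne'
  have hclip0 : clip δ 0 = 0 := clip_of_abs_le (by simpa using hδ)
  refine GDLowerBound.of_supportingSlope (huber_add_clip_mul_le hδ) abs_clip_sub_clip_le hclip0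
    fun x h0 hrec => ?_
  have hxN := huber_gd_iterate_eq hδ hαt h0 hrec (k := N) (by nlinarith [mul_nonneg hαt hδ])
  have hδxN : δ ≤ x N := by rw [hxN]; nlinarith [mul_nonneg hαt hδ]
  rw [huber, huber, clip_of_le hδ hδxN, hclip0, hxN]
  have hgap : (1 - N * αt * δ) * δ - δ ^ 2 / 2 = δ / 2 := by linear_combination (-δ / 2) * hδD
  rw [hgap, show 1 / (2 * (2 * N * αt + 1)) = δ / 2 by rw [hδdef, div_div, mul_comm]]
  simp

theorem stmt_10_general (N : ℕ) (αt : ℝ) (α r : ℝ) (hα : 1 ≤ α)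
    (hbal : 1 / (2 * (2 * N * α + 1)) = (1 - α) ^ (2 * N) / 2)
    (hr : r = 1 / (2 * (2 * N * α + 1))) :
    ∃ f f' : ℝ → ℝ, ∃ xstar : ℝ,
      ConvexOn ℝ Set.univ f ∧
      (∀ x, HasDerivAt f (f' x) x) ∧
      (∀ x y, |f' x - f' y| ≤ |x - y|) ∧
      IsMinOn f Set.univ xstar ∧
      |(1 : ℝ) - xstar| ≤ 1 ∧
      ∀ x : ℕ → ℝ, x 0 = 1 → (∀ k, x (k + 1) = x k - αt * f' (x k)) →
        f (x N) - f xstar ≥ r := by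
  change GDLowerBound N αt r
  rcases le_total αt 0 with hneg | hpos
  · refine (gdLowerBound_quadratic N αt).mono ?_
    have hr_le : r ≤ 1 / 2 := by
      rw [hr]; gcongr; nlinarith [show (0 : ℝ) ≤ N * α by positivity]
    have : (1 : ℝ) ≤ (1 - αt) ^ (2 * N) := one_le_pow₀ (by linarith)
    linarith
  rcases le_total αt α with hle | hge
  · refine (gdLowerBound_huber N hpos).mono ?_
    rw [hr]; gcongr
  · refine (gdLowerBound_quadratic N αt).mono ?_
    rw [hr, hbal, pow_mul, pow_mul]
    have hsq : (1 - α) ^ 2 ≤ (1 - αt) ^ 2 := by nlinarith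
    linarith [pow_le_pow_left₀ (sq_nonneg _) hsq N]

theorem stmt_10 (N : ℕ) (hN : 0 < N) (αt : ℝ) (α r : ℝ) (hα : 1 ≤ α)
    (hbal : 1 / (2 * (2 * N * α + 1)) = (1 - α) ^ (2 * N) / 2)
    (hr : r = 1 / (2 * (2 * N * α + 1))) :
    ∃ f f' : ℝ → ℝ, ∃ xstar : ℝ,
      ConvexOn ℝ Set.univ f ∧
      (∀ x, HasDerivAt f (f' x) x) ∧
      (∀ x y, |f' x - f' y| ≤ |x - y|) ∧
      IsMinOn f Set.univ xstar ∧
      |(1 : ℝ) - xstar| ≤ 1 ∧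
      ∀ x : ℕ → ℝ, x 0 = 1 → (∀ k, x (k + 1) = x k - αt * f' (x k)) →
        f (x N) - f xstar ≥ r :=
  stmt_10_general N αt α r hα hbal hr
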